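/- arXiv:2307.04107 — 3 statements merged into one kernel-verified Lean document; each statement's English description precedes it below -/
import Mathlib

section
/- (Lemma 23, coflow-level total-cost bound.) Assume the coflow-level dual data and let a ∈ {0,1}. Assume: (A') for every k with α_k > 0: DI(k) ≤ m·r_k/κ, DJ(k) ≤ m·r_k/κ, and r_{k'} ≤ r_k for every k' ≤ k; (B') for all i ∈ I and k' with βI(i,k') > 0: r_ℓ ≤ κ·DI(k')/m for every ℓ ≤ k', DI(k)+DJ(k) ≤ 2·DI(k') for every k ≤ k', and DI(k')² ≤ 2m·FI(i,k'), and symmetrically for βJ with DJ and FJ; (C') C_k ≤ a·max_{k'≤k} r_{k'} + χ·(DI(k)+DJ(k)) for every k; (D) w_k = α_k + Σ_{i∈I} Σ_{k'=k}^n βI(i,k')·LI(i,k) + Σ_{j∈J} Σ_{k'=k}^n βJ(j,k')·LJ(j,k) for every k. Then Σ_k w_k·C_k ≤ (a + 2χ·m/κ)·Σ_k α_k·r_k + 2(aκ + 2χ·m)·( Σ_{i∈I} Σ_k βI(i,k)·FI(i,k) + Σ_{j∈J} Σ_k βJ(j,k)·FJ(j,k) ). -/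
private lemma sum_Ici_swap {n : ℕ} (g : Fin n → Fin n → ℝ) :
    ∑ k, ∑ k' ∈ Finset.Ici k, g k k' = ∑ k', ∑ k ∈ Finset.Iic k', g k k' := by
  refine Finset.sum_comm' ?_
  intro x y
  simp [Finset.mem_Ici, Finset.mem_Iic]

/-- Lemma 23 (coflow-level total-cost bound). -/
theorem coflow_level_total_cost_bound
    -- coflow-level dual data
    (n : ℕ) (hn : 1 ≤ n)
    (I J : Type*) [Fintype I] [Fintype J] [Nonempty I] [Nonempty J]
    (m κ χ : ℝ) (hm : 2 ≤ m) (hκ : 0 < κ) (hχ : 1 ≤ χ)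
    (w r C α DI DJ : Fin n → ℝ)
    (βI LI FI : I → Fin n → ℝ) (βJ LJ FJ : J → Fin n → ℝ)
    (hw : ∀ k, 0 ≤ w k) (hr : ∀ k, 0 ≤ r k) (hC : ∀ k, 0 ≤ C k)
    (hα : ∀ k, 0 ≤ α k)
    (hβI : ∀ i k, 0 ≤ βI i k) (hβJ : ∀ j k, 0 ≤ βJ j k)
    (hLI : ∀ i k, 0 ≤ LI i k) (hLJ : ∀ j k, 0 ≤ LJ j k)
    (hDI : ∀ k, 0 ≤ DI k) (hDJ : ∀ k, 0 ≤ DJ k)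
    (hFI : ∀ i k, 0 ≤ FI i k) (hFJ : ∀ j k, 0 ≤ FJ j k)
    (hDImono : Monotone DI) (hDJmono : Monotone DJ)
    (hcumI : ∀ i k, ∑ k' ∈ Finset.Iic k, LI i k' ≤ DI k)
    (hcumJ : ∀ j k, ∑ k' ∈ Finset.Iic k, LJ j k' ≤ DJ k)
    (a : ℝ) (ha : a = 0 ∨ a = 1)
    -- (A') Observation 3 parts (5)–(7)
    (hA : ∀ k, 0 < α k →
      DI k ≤ m * r k / κ ∧ DJ k ≤ m * r k / κ ∧ ∀ k' ≤ k, r k' ≤ r k)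
    -- (B') Observation 3 parts (1)–(4) and Observation 4
    (hBI : ∀ i k', 0 < βI i k' →
      (∀ ℓ ≤ k', r ℓ ≤ κ * DI k' / m) ∧
      (∀ k ≤ k', DI k + DJ k ≤ 2 * DI k') ∧
      (DI k') ^ 2 ≤ 2 * m * FI i k')
    (hBJ : ∀ j k', 0 < βJ j k' →
      (∀ ℓ ≤ k', r ℓ ≤ κ * DJ k' / m) ∧
      (∀ k ≤ k', DI k + DJ k ≤ 2 * DJ k') ∧
      (DJ k') ^ 2 ≤ 2 * m * FJ j k')
    -- (C') completion-time bound of Lemma 21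
    (hCb : ∀ k, C k ≤ a * (Finset.Iic k).sup' Finset.nonempty_Iic r
        + χ * (DI k + DJ k))
    -- (D) tightness of the dual constraints
    (hD : ∀ k, w k = α k
        + ∑ i, ∑ k' ∈ Finset.Ici k, βI i k' * LI i k
        + ∑ j, ∑ k' ∈ Finset.Ici k, βJ j k' * LJ j k) :
    ∑ k, w k * C k
      ≤ (a + 2 * χ * m / κ) * ∑ k, α k * r k
        + 2 * (a * κ + 2 * χ * m) *
            (∑ i, ∑ k, βI i k * FI i k + ∑ j, ∑ k, βJ j k * FJ j k) := by
  have ha0 : 0 ≤ a := by rcases ha with h | h <;> rw [h] <;> norm_num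
  have hm0 : (0:ℝ) < m := by linarith
  have hm0' : m ≠ 0 := ne_of_gt hm0
  have hχ0 : (0:ℝ) ≤ χ := by linarith
  have hc0 : 0 ≤ a * κ / m + 2 * χ := by positivity
  -- Step 1: rewrite the total cost
  have key : ∑ k, w k * C k
      = ∑ k, α k * C k
        + ∑ i, ∑ k', βI i k' * ∑ k ∈ Finset.Iic k', LI i k * C k
        + ∑ j, ∑ k', βJ j k' * ∑ k ∈ Finset.Iic k', LJ j k * C k := by
    have e1 : ∀ k : Fin n, w k * C k = α k * C k
        + ∑ i, ∑ k' ∈ Finset.Ici k, βI i k' * (LI i k * C k)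
        + ∑ j, ∑ k' ∈ Finset.Ici k, βJ j k' * (LJ j k * C k) := by
      intro k
      rw [hD k]
      simp only [add_mul, Finset.sum_mul, mul_assoc]
    calc ∑ k, w k * C k
        = ∑ k, (α k * C k
            + ∑ i, ∑ k' ∈ Finset.Ici k, βI i k' * (LI i k * C k)
            + ∑ j, ∑ k' ∈ Finset.Ici k, βJ j k' * (LJ j k * C k)) :=
          Finset.sum_congr rfl fun k _ => e1 k
      _ = ∑ k, α k * C k
            + ∑ k, ∑ i, ∑ k' ∈ Finset.Ici k, βI i k' * (LI i k * C k)
            + ∑ k, ∑ j, ∑ k' ∈ Finset.Ici k, βJ j k' * (LJ j k * C k) := by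
          rw [Finset.sum_add_distrib, Finset.sum_add_distrib]
      _ = ∑ k, α k * C k
            + ∑ i, ∑ k', βI i k' * ∑ k ∈ Finset.Iic k', LI i k * C k
            + ∑ j, ∑ k', βJ j k' * ∑ k ∈ Finset.Iic k', LJ j k * C k := by
          congr 1
          · congr 1
            rw [Finset.sum_comm]
            refine Finset.sum_congr rfl fun i _ => ?_
            rw [sum_Ici_swap (fun k k' => βI i k' * (LI i k * C k))]
            exact Finset.sum_congr rfl fun k' _ => (Finset.mul_sum _ _ _).symm
          · rw [Finset.sum_comm]
            refine Finset.sum_congr rfl fun j _ => ?_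
            rw [sum_Ici_swap (fun k k' => βJ j k' * (LJ j k * C k))]
            exact Finset.sum_congr rfl fun k' _ => (Finset.mul_sum _ _ _).symm
  -- Step 2: bound the α part
  have h1 : ∑ k, α k * C k ≤ (a + 2 * χ * m / κ) * ∑ k, α k * r k := by
    rw [Finset.mul_sum]
    refine Finset.sum_le_sum fun k _ => ?_
    rcases (hα k).lt_or_eq with hpos | hzero
    · obtain ⟨hd1, hd2, hd3⟩ := hA k hpos
      have hs : (Finset.Iic k).sup' Finset.nonempty_Iic r ≤ r k :=
        Finset.sup'_le _ _ fun ℓ hℓ => hd3 ℓ (Finset.mem_Iic.mp hℓ)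
      have hCk : C k ≤ (a + 2 * χ * m / κ) * r k := by
        have h2 : χ * (DI k + DJ k) ≤ χ * (m * r k / κ + m * r k / κ) := by
          apply mul_le_mul_of_nonneg_left (by linarith) hχ0
        have h3 : a * ((Finset.Iic k).sup' Finset.nonempty_Iic r) ≤ a * r k :=
          mul_le_mul_of_nonneg_left hs ha0
        have h4 : (a + 2 * χ * m / κ) * r k
            = a * r k + χ * (m * r k / κ + m * r k / κ) := by ring
        have := hCb k
        linarith
      calc α k * C k ≤ α k * ((a + 2 * χ * m / κ) * r k) :=
            mul_le_mul_of_nonneg_left hCk (hα k)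
        _ = (a + 2 * χ * m / κ) * (α k * r k) := by ring
    · rw [← hzero]
      have : 0 ≤ (a + 2 * χ * m / κ) * (0 * r k) := by
        rw [zero_mul, mul_zero]
      simpa using this
  -- Step 3: bound the βI part
  have h2 : ∑ i, ∑ k', βI i k' * ∑ k ∈ Finset.Iic k', LI i k * C k
      ≤ 2 * (a * κ + 2 * χ * m) * ∑ i, ∑ k, βI i k * FI i k := by
    rw [Finset.mul_sum]
    refine Finset.sum_le_sum fun i _ => ?_
    rw [Finset.mul_sum]
    refine Finset.sum_le_sum fun k' _ => ?_
    rcases (hβI i k').lt_or_eq with hpos | hzero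
    · obtain ⟨hb1, hb2, hb3⟩ := hBI i k' hpos
      have hC' : ∀ k ∈ Finset.Iic k', C k ≤ (a * κ / m + 2 * χ) * DI k' := by
        intro k hk
        have hkk' := Finset.mem_Iic.mp hk
        have hs : (Finset.Iic k).sup' Finset.nonempty_Iic r ≤ κ * DI k' / m :=
          Finset.sup'_le _ _ fun ℓ hℓ =>
            hb1 ℓ (le_trans (Finset.mem_Iic.mp hℓ) hkk')
        have h3 : a * ((Finset.Iic k).sup' Finset.nonempty_Iic r)
            ≤ a * (κ * DI k' / m) := mul_le_mul_of_nonneg_left hs ha0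
        have h4 : χ * (DI k + DJ k) ≤ χ * (2 * DI k') :=
          mul_le_mul_of_nonneg_left (hb2 k hkk') hχ0
        have h5 : (a * κ / m + 2 * χ) * DI k'
            = a * (κ * DI k' / m) + χ * (2 * DI k') := by ring
        have := hCb k
        linarith
      have hsum : ∑ k ∈ Finset.Iic k', LI i k * C k
          ≤ (a * κ / m + 2 * χ) * DI k' ^ 2 := by
        calc ∑ k ∈ Finset.Iic k', LI i k * C k
            ≤ ∑ k ∈ Finset.Iic k', LI i k * ((a * κ / m + 2 * χ) * DI k') :=
              Finset.sum_le_sum fun k hk =>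
                mul_le_mul_of_nonneg_left (hC' k hk) (hLI i k)
          _ = (∑ k ∈ Finset.Iic k', LI i k) * ((a * κ / m + 2 * χ) * DI k') :=
              (Finset.sum_mul _ _ _).symm
          _ ≤ DI k' * ((a * κ / m + 2 * χ) * DI k') := by
              apply mul_le_mul_of_nonneg_right (hcumI i k')
              exact mul_nonneg hc0 (hDI k')
          _ = (a * κ / m + 2 * χ) * DI k' ^ 2 := by ring
      have hfin : ∑ k ∈ Finset.Iic k', LI i k * C k
          ≤ 2 * (a * κ + 2 * χ * m) * FI i k' := by
        have h6 : (a * κ / m + 2 * χ) * DI k' ^ 2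
            ≤ (a * κ / m + 2 * χ) * (2 * m * FI i k') :=
          mul_le_mul_of_nonneg_left hb3 hc0
        have h7 : (a * κ / m + 2 * χ) * (2 * m * FI i k')
            = 2 * (a * κ + 2 * χ * m) * FI i k' := by
          field_simp
        linarith
      calc βI i k' * ∑ k ∈ Finset.Iic k', LI i k * C k
          ≤ βI i k' * (2 * (a * κ + 2 * χ * m) * FI i k') :=
            mul_le_mul_of_nonneg_left hfin (hβI i k')
        _ = 2 * (a * κ + 2 * χ * m) * (βI i k' * FI i k') := by ring
    · rw [← hzero]
      simp
  -- Step 4: bound the βJ part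
  have h3 : ∑ j, ∑ k', βJ j k' * ∑ k ∈ Finset.Iic k', LJ j k * C k
      ≤ 2 * (a * κ + 2 * χ * m) * ∑ j, ∑ k, βJ j k * FJ j k := by
    rw [Finset.mul_sum]
    refine Finset.sum_le_sum fun j _ => ?_
    rw [Finset.mul_sum]
    refine Finset.sum_le_sum fun k' _ => ?_
    rcases (hβJ j k').lt_or_eq with hpos | hzero
    · obtain ⟨hb1, hb2, hb3⟩ := hBJ j k' hpos
      have hC' : ∀ k ∈ Finset.Iic k', C k ≤ (a * κ / m + 2 * χ) * DJ k' := by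
        intro k hk
        have hkk' := Finset.mem_Iic.mp hk
        have hs : (Finset.Iic k).sup' Finset.nonempty_Iic r ≤ κ * DJ k' / m :=
          Finset.sup'_le _ _ fun ℓ hℓ =>
            hb1 ℓ (le_trans (Finset.mem_Iic.mp hℓ) hkk')
        have h3 : a * ((Finset.Iic k).sup' Finset.nonempty_Iic r)
            ≤ a * (κ * DJ k' / m) := mul_le_mul_of_nonneg_left hs ha0
        have h4 : χ * (DI k + DJ k) ≤ χ * (2 * DJ k') :=
          mul_le_mul_of_nonneg_left (hb2 k hkk') hχ0
        have h5 : (a * κ / m + 2 * χ) * DJ k'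
            = a * (κ * DJ k' / m) + χ * (2 * DJ k') := by ring
        have := hCb k
        linarith
      have hsum : ∑ k ∈ Finset.Iic k', LJ j k * C k
          ≤ (a * κ / m + 2 * χ) * DJ k' ^ 2 := by
        calc ∑ k ∈ Finset.Iic k', LJ j k * C k
            ≤ ∑ k ∈ Finset.Iic k', LJ j k * ((a * κ / m + 2 * χ) * DJ k') :=
              Finset.sum_le_sum fun k hk =>
                mul_le_mul_of_nonneg_left (hC' k hk) (hLJ j k)
          _ = (∑ k ∈ Finset.Iic k', LJ j k) * ((a * κ / m + 2 * χ) * DJ k') :=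
              (Finset.sum_mul _ _ _).symm
          _ ≤ DJ k' * ((a * κ / m + 2 * χ) * DJ k') := by
              apply mul_le_mul_of_nonneg_right (hcumJ j k')
              exact mul_nonneg hc0 (hDJ k')
          _ = (a * κ / m + 2 * χ) * DJ k' ^ 2 := by ring
      have hfin : ∑ k ∈ Finset.Iic k', LJ j k * C k
          ≤ 2 * (a * κ + 2 * χ * m) * FJ j k' := by
        have h6 : (a * κ / m + 2 * χ) * DJ k' ^ 2
            ≤ (a * κ / m + 2 * χ) * (2 * m * FJ j k') :=
          mul_le_mul_of_nonneg_left hb3 hc0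
        have h7 : (a * κ / m + 2 * χ) * (2 * m * FJ j k')
            = 2 * (a * κ + 2 * χ * m) * FJ j k' := by
          field_simp
        linarith
      calc βJ j k' * ∑ k ∈ Finset.Iic k', LJ j k * C k
          ≤ βJ j k' * (2 * (a * κ + 2 * χ * m) * FJ j k') :=
            mul_le_mul_of_nonneg_left hfin (hβJ j k')
        _ = 2 * (a * κ + 2 * χ * m) * (βJ j k' * FJ j k') := by ring
    · rw [← hzero]
      simp
  rw [key, mul_add]
  linarith
end

section
/- (Theorem 1, flow-level scheduling with release times.) Assume the flow-level dual data with κ = 1/2 and a = 1, hypotheses (A), (B), (C), (D) of Lemma 3, and in addition the weak-duality bound (E): Σ_k α_k·r_k + Σ_{i∈I} Σ_k βI(i,k)·FI(i,k) + Σ_{j∈J} Σ_k βJ(j,k)·FJ(j,k) ≤ OPT. Then Σ_k w_k·C_k ≤ (4χ + 2 − 2/m)·OPT. -/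
lemma sum_Ici_comm {n : ℕ} (f : Fin n → Fin n → ℝ) :
    ∑ k, ∑ k' ∈ Finset.Ici k, f k k' = ∑ k', ∑ k ∈ Finset.Iic k', f k k' := by
  have h1 : ∀ k : Fin n, Finset.Ici k = Finset.univ.filter (fun k' => k ≤ k') := by
    intro k; ext x; simp
  have h2 : ∀ k' : Fin n, Finset.Iic k' = Finset.univ.filter (fun k => k ≤ k') := by
    intro k'; ext x; simp
  simp only [h1, h2, Finset.sum_filter]
  exact Finset.sum_comm

/-- Theorem 1 (flow-level scheduling with release times): approximation ratio 4χ + 2 − 2/m. -/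
theorem flow_level_with_release_times
    -- flow-level dual data
    (n : ℕ) (hn : 1 ≤ n)
    (I J : Type*) [Fintype I] [Fintype J] [Nonempty I] [Nonempty J]
    (m χ : ℝ) (hm : 2 ≤ m) (hχ : 1 ≤ χ)
    (w r C Cstar α DI DJ : Fin n → ℝ)
    (βI LI FI : I → Fin n → ℝ) (βJ LJ FJ : J → Fin n → ℝ)
    (hw : ∀ k, 0 ≤ w k) (hr : ∀ k, 0 ≤ r k) (hC : ∀ k, 0 ≤ C k)
    (hCstar : ∀ k, 0 ≤ Cstar k) (hα : ∀ k, 0 ≤ α k)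
    (hβI : ∀ i k, 0 ≤ βI i k) (hβJ : ∀ j k, 0 ≤ βJ j k)
    (hLI : ∀ i k, 0 ≤ LI i k) (hLJ : ∀ j k, 0 ≤ LJ j k)
    (hDI : ∀ k, 0 ≤ DI k) (hDJ : ∀ k, 0 ≤ DJ k)
    (hFI : ∀ i k, 0 ≤ FI i k) (hFJ : ∀ j k, 0 ≤ FJ j k)
    (hDImono : Monotone DI) (hDJmono : Monotone DJ)
    (hcumI : ∀ i k, ∑ k' ∈ Finset.Iic k, LI i k' ≤ DI k)
    (hcumJ : ∀ j k, ∑ k' ∈ Finset.Iic k, LJ j k' ≤ DJ k)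
    -- (A) with κ = 1/2
    (hA : ∀ k, 0 < α k →
      DI k ≤ 2 * m * r k ∧ DJ k ≤ 2 * m * r k ∧ ∀ k' ≤ k, r k' ≤ r k)
    -- (B) with κ = 1/2
    (hBI : ∀ i k', 0 < βI i k' →
      (∀ ℓ ≤ k', r ℓ ≤ DI k' / (2 * m)) ∧
      (∀ k ≤ k', DI k + DJ k ≤ 2 * DI k') ∧
      (DI k') ^ 2 ≤ 2 * m * FI i k')
    (hBJ : ∀ j k', 0 < βJ j k' →
      (∀ ℓ ≤ k', r ℓ ≤ DJ k' / (2 * m)) ∧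
      (∀ k ≤ k', DI k + DJ k ≤ 2 * DJ k') ∧
      (DJ k') ^ 2 ≤ 2 * m * FJ j k')
    -- (C) with a = 1
    (hCb : ∀ k, C k ≤ (Finset.Iic k).sup' Finset.nonempty_Iic r
        + χ * (DI k + DJ k) / m + (1 - 2 / m) * Cstar k)
    -- (D) tightness of the dual constraints
    (hD : ∀ k, w k = α k
        + ∑ i, ∑ k' ∈ Finset.Ici k, βI i k' * LI i k
        + ∑ j, ∑ k' ∈ Finset.Ici k, βJ j k' * LJ j k)
    -- (E) weak duality
    (hE : ∑ k, α k * r k + ∑ i, ∑ k, βI i k * FI i k + ∑ j, ∑ k, βJ j k * FJ j k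
        ≤ ∑ k, w k * Cstar k) :
    ∑ k, w k * C k ≤ (4 * χ + 2 - 2 / m) * ∑ k, w k * Cstar k := by
  have hm0 : (0:ℝ) < m := lt_of_lt_of_le two_pos hm
  have hχ0 : (0:ℝ) ≤ χ := le_trans zero_le_one hχ
  have h4χ : (0:ℝ) ≤ 4 * χ + 1 := by linarith
  set R : Fin n → ℝ := fun k => (Finset.Iic k).sup' Finset.nonempty_Iic r with hRdef
  set g : Fin n → ℝ := fun k => R k + χ * (DI k + DJ k) / m with hgdef
  have hgk : ∀ k, g k = R k + χ * (DI k + DJ k) / m := fun k => rfl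
  have hR0 : ∀ k, 0 ≤ R k := fun k =>
    le_trans (hr k) (Finset.le_sup' r (Finset.mem_Iic.mpr le_rfl))
  -- Step 1: apply (C) pointwise
  have step1 : ∑ k, w k * C k ≤ ∑ k, w k * g k + (1 - 2 / m) * ∑ k, w k * Cstar k := by
    calc ∑ k, w k * C k
        ≤ ∑ k, (w k * g k + (1 - 2 / m) * (w k * Cstar k)) := by
          apply Finset.sum_le_sum
          intro k _
          have h := hCb k
          calc w k * C k ≤ w k * (g k + (1 - 2 / m) * Cstar k) := by
                apply mul_le_mul_of_nonneg_left _ (hw k)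
                rw [hgk k]; linarith
            _ = w k * g k + (1 - 2 / m) * (w k * Cstar k) := by ring
      _ = ∑ k, w k * g k + (1 - 2 / m) * ∑ k, w k * Cstar k := by
          rw [Finset.sum_add_distrib, Finset.mul_sum]
  -- Step 2: expand w via (D) and exchange sums
  have step2 : ∑ k, w k * g k
      = ∑ k, α k * g k
        + ∑ i, ∑ k', βI i k' * ∑ k ∈ Finset.Iic k', LI i k * g k
        + ∑ j, ∑ k', βJ j k' * ∑ k ∈ Finset.Iic k', LJ j k * g k := by
    have h1 : ∀ k : Fin n, w k * g k = α k * g k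
        + ∑ i, ∑ k' ∈ Finset.Ici k, βI i k' * LI i k * g k
        + ∑ j, ∑ k' ∈ Finset.Ici k, βJ j k' * LJ j k * g k := by
      intro k
      rw [hD k]
      simp only [add_mul, Finset.sum_mul]
    rw [Finset.sum_congr rfl (fun k _ => h1 k), Finset.sum_add_distrib, Finset.sum_add_distrib]
    congr 1
    · congr 1
      rw [Finset.sum_comm]
      apply Finset.sum_congr rfl; intro i _
      rw [sum_Ici_comm (fun k k' => βI i k' * LI i k * g k)]
      apply Finset.sum_congr rfl; intro k' _
      rw [Finset.mul_sum]
      apply Finset.sum_congr rfl; intro k _; ring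
    · rw [Finset.sum_comm]
      apply Finset.sum_congr rfl; intro j _
      rw [sum_Ici_comm (fun k k' => βJ j k' * LJ j k * g k)]
      apply Finset.sum_congr rfl; intro k' _
      rw [Finset.mul_sum]
      apply Finset.sum_congr rfl; intro k _; ring
  -- Step 3a: bound the α-terms
  have boundα : ∑ k, α k * g k ≤ (4 * χ + 1) * ∑ k, α k * r k := by
    rw [Finset.mul_sum]
    apply Finset.sum_le_sum
    intro k _
    rcases eq_or_lt_of_le (hα k) with h | h
    · rw [← h]; simp
    · obtain ⟨hDIk, hDJk, hrk⟩ := hA k h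
      have hRle : R k ≤ r k :=
        Finset.sup'_le _ _ (fun ℓ hℓ => hrk ℓ (Finset.mem_Iic.mp hℓ))
      have hdiv : χ * (DI k + DJ k) / m ≤ 4 * χ * r k := by
        rw [div_le_iff₀ hm0]
        nlinarith [mul_le_mul_of_nonneg_left (add_le_add hDIk hDJk) hχ0]
      have hgle : g k ≤ (4 * χ + 1) * r k := by rw [hgk k]; linarith
      calc α k * g k ≤ α k * ((4 * χ + 1) * r k) :=
            mul_le_mul_of_nonneg_left hgle (hα k)
        _ = (4 * χ + 1) * (α k * r k) := by ring
  -- Step 3b: bound the β-terms (generic helper)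
  have key : ∀ (β L F D : Fin n → ℝ), (∀ k, 0 ≤ β k) → (∀ k, 0 ≤ L k) →
      (∀ k, ∑ k' ∈ Finset.Iic k, L k' ≤ D k) → (∀ k, 0 ≤ D k) →
      (∀ k', 0 < β k' →
        (∀ ℓ ≤ k', r ℓ ≤ D k' / (2 * m)) ∧
        (∀ k ≤ k', DI k + DJ k ≤ 2 * D k') ∧
        (D k') ^ 2 ≤ 2 * m * F k') →
      ∀ k', β k' * ∑ k ∈ Finset.Iic k', L k * g k ≤ (4 * χ + 1) * (β k' * F k') := by
    intro β L F D hβ hL hcum hD0 hB k'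
    rcases eq_or_lt_of_le (hβ k') with h | h
    · rw [← h]; simp
    · obtain ⟨hB1, hB2, hB3⟩ := hB k' h
      have h2m : (0:ℝ) < 2 * m := by positivity
      have hc : 0 ≤ (4 * χ + 1) * D k' / (2 * m) := by
        apply div_nonneg _ h2m.le
        exact mul_nonneg h4χ (hD0 k')
      have hgb : ∀ k ∈ Finset.Iic k', g k ≤ (4 * χ + 1) * D k' / (2 * m) := by
        intro k hk
        have hkk' := Finset.mem_Iic.mp hk
        have hR : R k ≤ D k' / (2 * m) :=
          Finset.sup'_le _ _ (fun ℓ hℓ => hB1 ℓ (le_trans (Finset.mem_Iic.mp hℓ) hkk'))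
        have h2 : χ * (DI k + DJ k) / m ≤ χ * (2 * D k') / m := by
          gcongr
          exact hB2 k hkk'
        have heq : (4 * χ + 1) * D k' / (2 * m) = D k' / (2 * m) + χ * (2 * D k') / m := by
          field_simp; ring
        rw [hgk k, heq]; linarith
      have hS : ∑ k ∈ Finset.Iic k', L k * g k ≤ D k' * ((4 * χ + 1) * D k' / (2 * m)) := by
        calc ∑ k ∈ Finset.Iic k', L k * g k
            ≤ ∑ k ∈ Finset.Iic k', L k * ((4 * χ + 1) * D k' / (2 * m)) :=
              Finset.sum_le_sum (fun k hk => mul_le_mul_of_nonneg_left (hgb k hk) (hL k))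
          _ = (∑ k ∈ Finset.Iic k', L k) * ((4 * χ + 1) * D k' / (2 * m)) :=
              (Finset.sum_mul _ _ _).symm
          _ ≤ D k' * ((4 * χ + 1) * D k' / (2 * m)) :=
              mul_le_mul_of_nonneg_right (hcum k') hc
      have hF2 : D k' ^ 2 / (2 * m) ≤ F k' := by
        rw [div_le_iff₀ h2m]; linarith [hB3]
      have hF : D k' * ((4 * χ + 1) * D k' / (2 * m)) ≤ (4 * χ + 1) * F k' := by
        calc D k' * ((4 * χ + 1) * D k' / (2 * m)) = (4 * χ + 1) * (D k' ^ 2 / (2 * m)) := by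
              ring
          _ ≤ (4 * χ + 1) * F k' := mul_le_mul_of_nonneg_left hF2 h4χ
      calc β k' * ∑ k ∈ Finset.Iic k', L k * g k ≤ β k' * ((4 * χ + 1) * F k') :=
            mul_le_mul_of_nonneg_left (hS.trans hF) h.le
        _ = (4 * χ + 1) * (β k' * F k') := by ring
  have boundI : ∑ i, ∑ k', βI i k' * ∑ k ∈ Finset.Iic k', LI i k * g k
      ≤ (4 * χ + 1) * ∑ i, ∑ k, βI i k * FI i k := by
    rw [Finset.mul_sum]
    apply Finset.sum_le_sum; intro i _
    rw [Finset.mul_sum]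
    exact Finset.sum_le_sum fun k' _ =>
      key (βI i) (LI i) (FI i) DI (hβI i) (hLI i) (hcumI i) hDI (hBI i) k'
  have boundJ : ∑ j, ∑ k', βJ j k' * ∑ k ∈ Finset.Iic k', LJ j k * g k
      ≤ (4 * χ + 1) * ∑ j, ∑ k, βJ j k * FJ j k := by
    rw [Finset.mul_sum]
    apply Finset.sum_le_sum; intro j _
    rw [Finset.mul_sum]
    exact Finset.sum_le_sum fun k' _ =>
      key (βJ j) (LJ j) (FJ j) DJ (hβJ j) (hLJ j) (hcumJ j) hDJ (hBJ j) k'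
  -- Combine
  have hdual : (4 * χ + 1) * (∑ k, α k * r k + ∑ i, ∑ k, βI i k * FI i k
        + ∑ j, ∑ k, βJ j k * FJ j k) ≤ (4 * χ + 1) * ∑ k, w k * Cstar k :=
    mul_le_mul_of_nonneg_left hE h4χ
  calc ∑ k, w k * C k
      ≤ ∑ k, w k * g k + (1 - 2 / m) * ∑ k, w k * Cstar k := step1
    _ = (∑ k, α k * g k
          + ∑ i, ∑ k', βI i k' * ∑ k ∈ Finset.Iic k', LI i k * g k
          + ∑ j, ∑ k', βJ j k' * ∑ k ∈ Finset.Iic k', LJ j k * g k)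
        + (1 - 2 / m) * ∑ k, w k * Cstar k := by rw [step2]
    _ ≤ ((4 * χ + 1) * ∑ k, α k * r k + (4 * χ + 1) * ∑ i, ∑ k, βI i k * FI i k
          + (4 * χ + 1) * ∑ j, ∑ k, βJ j k * FJ j k)
        + (1 - 2 / m) * ∑ k, w k * Cstar k := by
          exact add_le_add (add_le_add (add_le_add boundα boundI) boundJ) le_rfl
    _ = (4 * χ + 1) * (∑ k, α k * r k + ∑ i, ∑ k, βI i k * FI i k
          + ∑ j, ∑ k, βJ j k * FJ j k) + (1 - 2 / m) * ∑ k, w k * Cstar k := by ring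
    _ ≤ (4 * χ + 1) * ∑ k, w k * Cstar k + (1 - 2 / m) * ∑ k, w k * Cstar k := by
          linarith [hdual]
    _ = (4 * χ + 2 - 2 / m) * ∑ k, w k * Cstar k := by ring
end

section
/- (Theorem 1-1, flow-level scheduling with release times and weight ratio R.) Assume the flow-level dual data with κ = 1/2 and a = 1, a real R ≥ 1, hypotheses (A), (B), (C) of Lemma 3, the relaxed tightness (D_R): w_k ≤ R·( α_k + Σ_{i∈I} Σ_{k'=k}^n βI(i,k')·LI(i,k) + Σ_{j∈J} Σ_{k'=k}^n βJ(j,k')·LJ(j,k) ) for every k, and the weak-duality bound (E): Σ_k α_k·r_k + Σ_{i∈I} Σ_k βI(i,k)·FI(i,k) + Σ_{j∈J} Σ_k βJ(j,k)·FJ(j,k) ≤ OPT. Then Σ_k w_k·C_k ≤ (4Rχ + R + 1 − 2/m)·OPT. -/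
/-!
Write `X k = max_{k' ≤ k} r k' + χ (DI k + DJ k) / m`, so that (C) reads
`C k ≤ X k + (1 - 2/m) C* k`. Charging `w k ≤ R (α k + Σ β L)` (D_R) against `X k` and
exchanging the order of summation, each dual variable pays for `X`: when `α k > 0`, (A) gives
`X k ≤ (1 + 4χ) r k`; when `β k' > 0`, (B) gives `X k ≤ (1 + 4χ) D k' / (2m)` for all
`k ≤ k'`, so the cumulative load bound and `D k'² ≤ 2m F k'` give
`Σ_{k ≤ k'} L k X k ≤ (1 + 4χ) F k'`. Hence `Σ w X ≤ R (1 + 4χ)` times the dual objective,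
which is at most `OPT` by (E).
-/

open Finset

section LoadBounds

variable {κ : Type*} [Preorder κ] [LocallyFiniteOrderBot κ]

theorem sum_Iic_load_mul_le {L D F X : κ → ℝ} {μ c : ℝ} {k' : κ} (hμ : 0 < μ)
    (hc : 0 ≤ c) (hL : ∀ k, 0 ≤ L k) (hX : 0 ≤ X k') (hcum : ∑ k ∈ Iic k', L k ≤ D k')
    (hXD : ∀ k ≤ k', X k ≤ c * D k' / μ) (hDF : D k' ^ 2 ≤ μ * F k') :
    ∑ k ∈ Iic k', L k * X k ≤ c * F k' := by
  have hcap : 0 ≤ c * D k' / μ := hX.trans (hXD k' le_rfl)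
  calc ∑ k ∈ Iic k', L k * X k
      ≤ ∑ k ∈ Iic k', L k * (c * D k' / μ) :=
        sum_le_sum fun k hk => mul_le_mul_of_nonneg_left (hXD k (mem_Iic.mp hk)) (hL k)
    _ = (∑ k ∈ Iic k', L k) * (c * D k' / μ) := (sum_mul ..).symm
    _ ≤ D k' * (c * D k' / μ) := mul_le_mul_of_nonneg_right hcum hcap
    _ = c * (D k' ^ 2 / μ) := by ring
    _ ≤ c * F k' := mul_le_mul_of_nonneg_left ((div_le_iff₀' hμ).mpr hDF) hc

noncomputable def releaseLoadBound (m χ : ℝ) (r DI DJ : κ → ℝ) (k : κ) : ℝ :=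
  (Iic k).sup' nonempty_Iic r + χ * (DI k + DJ k) / m

variable {m χ : ℝ} {r DI DJ : κ → ℝ}

theorem releaseLoadBound_nonneg (hm : 0 ≤ m) (hχ : 0 ≤ χ) (hr : ∀ k, 0 ≤ r k)
    (hDI : ∀ k, 0 ≤ DI k) (hDJ : ∀ k, 0 ≤ DJ k) (k : κ) :
    0 ≤ releaseLoadBound m χ r DI DJ k :=
  add_nonneg ((hr k).trans (le_sup' r (mem_Iic.mpr le_rfl)))
    (div_nonneg (mul_nonneg hχ (add_nonneg (hDI k) (hDJ k))) hm)

theorem releaseLoadBound_le_of_release {k : κ} (hm : 0 < m) (hχ : 0 ≤ χ)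
    (hDIk : DI k ≤ 2 * m * r k) (hDJk : DJ k ≤ 2 * m * r k) (hrk : ∀ k' ≤ k, r k' ≤ r k) :
    releaseLoadBound m χ r DI DJ k ≤ (1 + 4 * χ) * r k := by
  have hmax : (Iic k).sup' nonempty_Iic r ≤ r k :=
    sup'_le _ _ fun k' hk' => hrk k' (mem_Iic.mp hk')
  have hload : χ * (DI k + DJ k) / m ≤ 4 * χ * r k := by
    rw [div_le_iff₀ hm]
    nlinarith
  unfold releaseLoadBound
  linarith

theorem releaseLoadBound_le_of_load {k' : κ} {D : ℝ} (hm : 0 < m) (hχ : 0 ≤ χ)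
    (hr : ∀ ℓ ≤ k', r ℓ ≤ D / (2 * m)) (hD : ∀ k ≤ k', DI k + DJ k ≤ 2 * D) :
    ∀ k ≤ k', releaseLoadBound m χ r DI DJ k ≤ (1 + 4 * χ) * D / (2 * m) := by
  intro k hk
  have hmax : (Iic k).sup' nonempty_Iic r ≤ D / (2 * m) :=
    sup'_le _ _ fun ℓ hℓ => hr ℓ ((mem_Iic.mp hℓ).trans hk)
  have hload : χ * (DI k + DJ k) / m ≤ χ * (2 * D) / m := by
    gcongr
    exact hD k hk
  calc releaseLoadBound m χ r DI DJ k ≤ D / (2 * m) + χ * (2 * D) / m :=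
        add_le_add hmax hload
    _ = (1 + 4 * χ) * D / (2 * m) := by field_simp; ring

end LoadBounds

theorem sum_mul_releaseLoadBound_le {κ : Type*} [Preorder κ] [Fintype κ]
    [LocallyFiniteOrderBot κ]
    {m χ : ℝ} {r DI DJ α : κ → ℝ} (hm : 0 < m) (hχ : 0 ≤ χ) (hα : ∀ k, 0 ≤ α k)
    (hA : ∀ k, 0 < α k → DI k ≤ 2 * m * r k ∧ DJ k ≤ 2 * m * r k ∧ ∀ k' ≤ k, r k' ≤ r k) :
    ∑ k, α k * releaseLoadBound m χ r DI DJ k ≤ (1 + 4 * χ) * ∑ k, α k * r k := by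
  rw [mul_sum]
  refine sum_le_sum fun k _ => ?_
  rcases (hα k).eq_or_lt with hzero | hpos
  · simp [← hzero]
  · obtain ⟨hDIk, hDJk, hrk⟩ := hA k hpos
    rw [mul_left_comm]
    exact mul_le_mul_of_nonneg_left
      (releaseLoadBound_le_of_release hm hχ hDIk hDJk hrk) hpos.le

section DualCharge

variable {κ : Type*} [Preorder κ] [Fintype κ] [LocallyFiniteOrderTop κ]
  [LocallyFiniteOrderBot κ]

theorem sum_sum_Ici_eq_sum_sum_Iic {M : Type*} [AddCommMonoid M] (f : κ → κ → M) :
    ∑ k, ∑ k' ∈ Ici k, f k k' = ∑ k', ∑ k ∈ Iic k', f k k' :=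
  sum_comm' (by simp)

theorem sum_port_charge_le {β L D F X : κ → ℝ} {μ c : ℝ} (hμ : 0 < μ) (hc : 0 ≤ c)
    (hβ : ∀ k, 0 ≤ β k) (hL : ∀ k, 0 ≤ L k) (hX : ∀ k, 0 ≤ X k)
    (hcum : ∀ k, ∑ k' ∈ Iic k, L k' ≤ D k)
    (hXD : ∀ k', 0 < β k' → ∀ k ≤ k', X k ≤ c * D k' / μ)
    (hDF : ∀ k', 0 < β k' → D k' ^ 2 ≤ μ * F k') :
    ∑ k, (∑ k' ∈ Ici k, β k' * L k) * X k ≤ c * ∑ k, β k * F k := by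
  calc ∑ k, (∑ k' ∈ Ici k, β k' * L k) * X k
      = ∑ k', β k' * ∑ k ∈ Iic k', L k * X k := by
        simp only [sum_mul, mul_sum, mul_assoc]
        exact sum_sum_Ici_eq_sum_sum_Iic _
    _ ≤ ∑ k', c * (β k' * F k') := by
        refine sum_le_sum fun k' _ => ?_
        rcases (hβ k').eq_or_lt with hzero | hpos
        · simp [← hzero]
        · rw [mul_left_comm]
          exact mul_le_mul_of_nonneg_left
            (sum_Iic_load_mul_le hμ hc hL (hX k') (hcum k') (hXD k' hpos) (hDF k' hpos)) hpos.le
    _ = c * ∑ k, β k * F k := (mul_sum ..).symm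

theorem sum_ports_charge_le {ι : Type*} [Fintype ι] {β L F : ι → κ → ℝ} {D X : κ → ℝ}
    {μ c : ℝ} (hμ : 0 < μ) (hc : 0 ≤ c) (hβ : ∀ i k, 0 ≤ β i k) (hL : ∀ i k, 0 ≤ L i k)
    (hX : ∀ k, 0 ≤ X k) (hcum : ∀ i k, ∑ k' ∈ Iic k, L i k' ≤ D k)
    (hXD : ∀ i k', 0 < β i k' → ∀ k ≤ k', X k ≤ c * D k' / μ)
    (hDF : ∀ i k', 0 < β i k' → D k' ^ 2 ≤ μ * F i k') :
    ∑ k, (∑ i, ∑ k' ∈ Ici k, β i k' * L i k) * X k ≤ c * ∑ i, ∑ k, β i k * F i k := by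
  calc ∑ k, (∑ i, ∑ k' ∈ Ici k, β i k' * L i k) * X k
      = ∑ i, ∑ k, (∑ k' ∈ Ici k, β i k' * L i k) * X k := by
        simp only [sum_mul]
        exact sum_comm
    _ ≤ c * ∑ i, ∑ k, β i k * F i k := by
        rw [mul_sum]
        exact sum_le_sum fun i _ =>
          sum_port_charge_le hμ hc (hβ i) (hL i) hX (hcum i) (hXD i) (hDF i)

end DualCharge

theorem flow_level_with_release_times_ratio_general
    -- flow-level dual data
    (n : ℕ)
    (I J : Type*) [Fintype I] [Fintype J]
    (m χ : ℝ) (hm : 2 ≤ m) (hχ : 1 ≤ χ)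
    (w r C Cstar α DI DJ : Fin n → ℝ)
    (βI LI FI : I → Fin n → ℝ) (βJ LJ FJ : J → Fin n → ℝ)
    (hw : ∀ k, 0 ≤ w k) (hr : ∀ k, 0 ≤ r k)
    (hα : ∀ k, 0 ≤ α k)
    (hβI : ∀ i k, 0 ≤ βI i k) (hβJ : ∀ j k, 0 ≤ βJ j k)
    (hLI : ∀ i k, 0 ≤ LI i k) (hLJ : ∀ j k, 0 ≤ LJ j k)
    (hDI : ∀ k, 0 ≤ DI k) (hDJ : ∀ k, 0 ≤ DJ k)
    (hcumI : ∀ i k, ∑ k' ∈ Finset.Iic k, LI i k' ≤ DI k)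
    (hcumJ : ∀ j k, ∑ k' ∈ Finset.Iic k, LJ j k' ≤ DJ k)
    (R : ℝ) (hR : 1 ≤ R)
    -- (A) with κ = 1/2
    (hA : ∀ k, 0 < α k →
      DI k ≤ 2 * m * r k ∧ DJ k ≤ 2 * m * r k ∧ ∀ k' ≤ k, r k' ≤ r k)
    -- (B) with κ = 1/2
    (hBI : ∀ i k', 0 < βI i k' →
      (∀ ℓ ≤ k', r ℓ ≤ DI k' / (2 * m)) ∧
      (∀ k ≤ k', DI k + DJ k ≤ 2 * DI k') ∧
      (DI k') ^ 2 ≤ 2 * m * FI i k')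
    (hBJ : ∀ j k', 0 < βJ j k' →
      (∀ ℓ ≤ k', r ℓ ≤ DJ k' / (2 * m)) ∧
      (∀ k ≤ k', DI k + DJ k ≤ 2 * DJ k') ∧
      (DJ k') ^ 2 ≤ 2 * m * FJ j k')
    -- (C) with a = 1
    (hCb : ∀ k, C k ≤ (Finset.Iic k).sup' Finset.nonempty_Iic r
        + χ * (DI k + DJ k) / m + (1 - 2 / m) * Cstar k)
    -- (D_R) relaxed tightness, Lemma 1-1
    (hDR : ∀ k, w k ≤ R * (α k
        + ∑ i, ∑ k' ∈ Finset.Ici k, βI i k' * LI i k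
        + ∑ j, ∑ k' ∈ Finset.Ici k, βJ j k' * LJ j k))
    -- (E) weak duality
    (hE : ∑ k, α k * r k + ∑ i, ∑ k, βI i k * FI i k + ∑ j, ∑ k, βJ j k * FJ j k
        ≤ ∑ k, w k * Cstar k) :
    ∑ k, w k * C k ≤ (4 * R * χ + R + 1 - 2 / m) * ∑ k, w k * Cstar k := by
  have hm0 : 0 < m := by linarith
  have hχ0 : 0 ≤ χ := by linarith
  have hc : 0 ≤ 1 + 4 * χ := by linarith
  set X := releaseLoadBound m χ r DI DJ
  have hX : ∀ k, 0 ≤ X k := releaseLoadBound_nonneg hm0.le hχ0 hr hDI hDJ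
  have hαX := sum_mul_releaseLoadBound_le hm0 hχ0 hα hA
  have hIX := sum_ports_charge_le (by positivity) hc hβI hLI hX hcumI
    (fun i k' h => releaseLoadBound_le_of_load hm0 hχ0 (hBI i k' h).1 (hBI i k' h).2.1)
    (fun i k' h => (hBI i k' h).2.2)
  have hJX := sum_ports_charge_le (by positivity) hc hβJ hLJ hX hcumJ
    (fun j k' h => releaseLoadBound_le_of_load hm0 hχ0 (hBJ j k' h).1 (hBJ j k' h).2.1)
    (fun j k' h => (hBJ j k' h).2.2)
  have hwX : ∑ k, w k * X k ≤ R * (1 + 4 * χ) * ∑ k, w k * Cstar k := by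
    calc ∑ k, w k * X k ≤ ∑ k, R * (α k + ∑ i, ∑ k' ∈ Ici k, βI i k' * LI i k
          + ∑ j, ∑ k' ∈ Ici k, βJ j k' * LJ j k) * X k :=
          sum_le_sum fun k _ => mul_le_mul_of_nonneg_right (hDR k) (hX k)
      _ = R * (∑ k, α k * X k + ∑ k, (∑ i, ∑ k' ∈ Ici k, βI i k' * LI i k) * X k
          + ∑ k, (∑ j, ∑ k' ∈ Ici k, βJ j k' * LJ j k) * X k) := by
          simp only [mul_assoc, ← mul_sum, add_mul, sum_add_distrib]
      _ ≤ R * ((1 + 4 * χ) * ∑ k, w k * Cstar k) := by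
          gcongr
          linear_combination hαX + hIX + hJX + (1 + 4 * χ) * hE
      _ = R * (1 + 4 * χ) * ∑ k, w k * Cstar k := by ring
  have hwC : ∑ k, w k * C k ≤ ∑ k, w k * X k + (1 - 2 / m) * ∑ k, w k * Cstar k := by
    rw [mul_sum, ← sum_add_distrib]
    refine sum_le_sum fun k _ => ?_
    rw [← mul_assoc, mul_comm _ (w k), mul_assoc, ← mul_add]
    exact mul_le_mul_of_nonneg_left (hCb k) (hw k)
  linear_combination hwC + hwX

/-- Theorem 1-1 (flow-level scheduling with release times, weight ratio R): ratio 4Rχ + R + 1 − 2/m. -/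
theorem flow_level_with_release_times_ratio
    -- flow-level dual data
    (n : ℕ) (hn : 1 ≤ n)
    (I J : Type*) [Fintype I] [Fintype J] [Nonempty I] [Nonempty J]
    (m χ : ℝ) (hm : 2 ≤ m) (hχ : 1 ≤ χ)
    (w r C Cstar α DI DJ : Fin n → ℝ)
    (βI LI FI : I → Fin n → ℝ) (βJ LJ FJ : J → Fin n → ℝ)
    (hw : ∀ k, 0 ≤ w k) (hr : ∀ k, 0 ≤ r k) (hC : ∀ k, 0 ≤ C k)
    (hCstar : ∀ k, 0 ≤ Cstar k) (hα : ∀ k, 0 ≤ α k)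
    (hβI : ∀ i k, 0 ≤ βI i k) (hβJ : ∀ j k, 0 ≤ βJ j k)
    (hLI : ∀ i k, 0 ≤ LI i k) (hLJ : ∀ j k, 0 ≤ LJ j k)
    (hDI : ∀ k, 0 ≤ DI k) (hDJ : ∀ k, 0 ≤ DJ k)
    (hFI : ∀ i k, 0 ≤ FI i k) (hFJ : ∀ j k, 0 ≤ FJ j k)
    (hDImono : Monotone DI) (hDJmono : Monotone DJ)
    (hcumI : ∀ i k, ∑ k' ∈ Finset.Iic k, LI i k' ≤ DI k)
    (hcumJ : ∀ j k, ∑ k' ∈ Finset.Iic k, LJ j k' ≤ DJ k)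
    (R : ℝ) (hR : 1 ≤ R)
    -- (A) with κ = 1/2
    (hA : ∀ k, 0 < α k →
      DI k ≤ 2 * m * r k ∧ DJ k ≤ 2 * m * r k ∧ ∀ k' ≤ k, r k' ≤ r k)
    -- (B) with κ = 1/2
    (hBI : ∀ i k', 0 < βI i k' →
      (∀ ℓ ≤ k', r ℓ ≤ DI k' / (2 * m)) ∧
      (∀ k ≤ k', DI k + DJ k ≤ 2 * DI k') ∧
      (DI k') ^ 2 ≤ 2 * m * FI i k')
    (hBJ : ∀ j k', 0 < βJ j k' →
      (∀ ℓ ≤ k', r ℓ ≤ DJ k' / (2 * m)) ∧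
      (∀ k ≤ k', DI k + DJ k ≤ 2 * DJ k') ∧
      (DJ k') ^ 2 ≤ 2 * m * FJ j k')
    -- (C) with a = 1
    (hCb : ∀ k, C k ≤ (Finset.Iic k).sup' Finset.nonempty_Iic r
        + χ * (DI k + DJ k) / m + (1 - 2 / m) * Cstar k)
    -- (D_R) relaxed tightness, Lemma 1-1
    (hDR : ∀ k, w k ≤ R * (α k
        + ∑ i, ∑ k' ∈ Finset.Ici k, βI i k' * LI i k
        + ∑ j, ∑ k' ∈ Finset.Ici k, βJ j k' * LJ j k))
    -- (E) weak duality
    (hE : ∑ k, α k * r k + ∑ i, ∑ k, βI i k * FI i k + ∑ j, ∑ k, βJ j k * FJ j k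
        ≤ ∑ k, w k * Cstar k) :
    ∑ k, w k * C k ≤ (4 * R * χ + R + 1 - 2 / m) * ∑ k, w k * Cstar k :=
  flow_level_with_release_times_ratio_general n I J m χ hm hχ w r C Cstar α DI DJ βI LI FI βJ LJ FJ
    hw hr hα hβI hβJ hLI hLJ hDI hDJ hcumI hcumJ R hR hA hBI hBJ hCb hDR hE
end
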